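/- arXiv:2307.05453 — 2 statements merged into one kernel-verified Lean document; each statement's English description precedes it below -/
import Mathlib

section
/- Let H, K be closed subspaces of L², a ∈ 𝒢L∞ with aK = H, and φ, ψ ∈ L∞; set E = T_{ā}^{H,K} and F = T_a^{K,H}, and suppose T_φ^K = E ∘ T_ψ^H ∘ F. Suppose C_H is an antilinear unitary on H such that F⁻¹ ∘ C_H ∘ F = E ∘ C_H ∘ E⁻¹, and set C_K = F⁻¹ ∘ C_H ∘ F. Then T_ψ^H is complex selfadjoint with respect to C_H if and only if T_φ^K is complex selfadjoint with respect to the antilinear unitary C_K. -/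
open MeasureTheory

noncomputable section

/-! ## Setup: the circle, L², L∞, multiplication operators, Hardy space,
model spaces, and generalized Toeplitz operators -/

instance : Fact (0 < 2 * Real.pi) := ⟨by positivity⟩

/-- The normalized Lebesgue (Haar) measure `dθ/2π` on the circle. -/
abbrev μH : Measure (AddCircle (2 * Real.pi)) := AddCircle.haarAddCircle

/-- The Lebesgue space `L²` of the circle. -/
abbrev L2 : Type := Lp ℂ 2 μH

/-- The space `L∞` of essentially bounded functions on the circle. -/
abbrev Linf : Type := Lp ℂ ⊤ μH

/-- Pointwise (a.e.) multiplication on `L∞`. -/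
instance : Mul Linf :=
  ⟨fun f g => ((Lp.memLp g).smul (p := ⊤) (r := ⊤) (Lp.memLp f)).toLp (⇑f • ⇑g)⟩

/-- The constant function `1` as an element of `L∞`. -/
instance : One Linf := ⟨(memLp_const (1 : ℂ)).toLp (fun _ => (1 : ℂ))⟩

/-- Complex conjugation on `L∞`. -/
instance : Star Linf :=
  ⟨fun f => ((Complex.conjCLE.toContinuousLinearMap).comp_memLp' (Lp.memLp f)).toLp
    ((starRingEnd ℂ) ∘ ⇑f)⟩

/-- Multiplication of an `L²` function by an `L∞` function. -/
def mulFun (φ : Linf) (f : L2) : L2 :=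
  ((Lp.memLp f).smul (p := ⊤) (r := 2) (Lp.memLp φ)).toLp (⇑φ • ⇑f)

lemma mulFun_coe (φ : Linf) (f : L2) : mulFun φ f =ᵐ[μH] ⇑φ • ⇑f :=
  MemLp.coeFn_toLp _

lemma mulFun_norm_le (φ : Linf) (f : L2) : ‖mulFun φ f‖ ≤ ‖φ‖ * ‖f‖ := by
  rw [mulFun, Lp.norm_toLp, Lp.norm_def, Lp.norm_def, ← ENNReal.toReal_mul]
  refine ENNReal.toReal_mono ?_ ?_
  · exact ENNReal.mul_ne_top (Lp.eLpNorm_ne_top φ) (Lp.eLpNorm_ne_top f)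
  · exact eLpNorm_smul_le_eLpNorm_top_mul_eLpNorm 2 (Lp.aestronglyMeasurable f) ⇑φ

/-- The bounded multiplication operator `M_φ : L² → L²` for `φ ∈ L∞`. -/
def mulCLM (φ : Linf) : L2 →L[ℂ] L2 :=
  LinearMap.mkContinuous
    { toFun := mulFun φ
      map_add' := by
        intro f g
        apply Lp.ext
        filter_upwards [mulFun_coe φ (f + g), mulFun_coe φ f, mulFun_coe φ g,
          Lp.coeFn_add f g, Lp.coeFn_add (mulFun φ f) (mulFun φ g)] with x h1 h2 h3 h4 h5
        simp only [Pi.smul_apply', Pi.add_apply] at *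
        rw [h1, h5, h2, h3, h4]
        exact smul_add _ _ _
      map_smul' := by
        intro c f
        apply Lp.ext
        filter_upwards [mulFun_coe φ (c • f), mulFun_coe φ f,
          Lp.coeFn_smul c f, Lp.coeFn_smul c (mulFun φ f)] with x h1 h2 h3 h4
        simp only [Pi.smul_apply', Pi.smul_apply, RingHom.id_apply] at *
        rw [h1, h4, h2, h3]
        exact smul_comm _ _ _ }
    ‖φ‖ (mulFun_norm_le φ)

/-- The image `a·K = {a f : f ∈ K}` of a subspace `K ⊆ L²` under multiplication by `a ∈ L∞`. -/
def smulSub (a : Linf) (K : Submodule ℂ L2) : Submodule ℂ L2 :=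
  K.map (mulCLM a : L2 →ₗ[ℂ] L2)

/-- The Hardy space `H² = {f ∈ L² : f̂(n) = 0 for n < 0}`. -/
def Hardy : Submodule ℂ L2 where
  carrier := {f | ∀ n : ℤ, n < 0 → fourierBasis.repr f n = 0}
  add_mem' := by
    intro f g hf hg n hn
    rw [map_add, lp.coeFn_add, Pi.add_apply, hf n hn, hg n hn, add_zero]
  zero_mem' := by
    intro n hn
    rw [map_zero, lp.coeFn_zero]
    rfl
  smul_mem' := by
    intro c f hf n hn
    rw [_root_.map_smul, lp.coeFn_smul, Pi.smul_apply, hf n hn, smul_zero]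

lemma hardy_isClosed : IsClosed (Hardy : Set L2) := by
  have h : (Hardy : Set L2) =
      ⋂ n : {m : ℤ // m < 0}, {f : L2 | fourierBasis.repr f n.1 = 0} := by
    ext f
    constructor
    · intro hf
      exact Set.mem_iInter.2 fun n => hf n.1 n.2
    · intro hf n hn
      exact Set.mem_iInter.1 hf ⟨n, hn⟩
  rw [h]
  refine isClosed_iInter fun n => isClosed_eq ?_ continuous_const
  have : (fun f : L2 => fourierBasis.repr f n.1) =
      fun f : L2 => (innerSL ℂ (fourierBasis n.1)) f := by
    funext f
    exact fourierBasis.repr_apply_apply f n.1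
  rw [this]
  exact (innerSL ℂ (fourierBasis n.1)).continuous

instance : CompleteSpace Hardy := hardy_isClosed.completeSpace_coe

/-- The model space `K_θ = H² ⊖ θH² = H² ∩ (θH²)^⊥`. -/
def modelSpace (θ : Linf) : Submodule ℂ L2 :=
  Hardy ⊓ (smulSub θ Hardy)ᗮ

instance (θ : Linf) : CompleteSpace (modelSpace θ) := by
  refine IsClosed.completeSpace_coe (hs := ?_)
  have h : (modelSpace θ : Set L2) = (Hardy : Set L2) ∩ ((smulSub θ Hardy)ᗮ : Set L2) := rfl
  rw [h]
  exact hardy_isClosed.inter (smulSub θ Hardy).isClosed_orthogonal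

/-- The generalized Toeplitz operator `T_φ^{H₁,H₂} = P_{H₂} M_φ |_{H₁}`. -/
def genToeplitz (φ : Linf) (H₁ H₂ : Submodule ℂ L2) [CompleteSpace H₂] : H₁ →L[ℂ] H₂ :=
  H₂.orthogonalProjectionOnto.comp ((mulCLM φ).comp H₁.subtypeL)

/-- The orthogonal projection of `L²` onto `H`, viewed as an operator `L² → L²`. -/
def projL (H : Submodule ℂ L2) [CompleteSpace H] : L2 →L[ℂ] L2 :=
  H.subtypeL.comp H.orthogonalProjectionOnto

/-- `φ ∈ H∞`: all negative Fourier coefficients of `φ` vanish. -/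
def IsHardyInf (φ : Linf) : Prop := ∀ n : ℤ, n < 0 → fourierCoeff (⇑φ) n = 0

/-- `θ` is an inner function: `θ ∈ H∞` and `|θ| = 1` a.e. on the circle. -/
def IsInner (θ : Linf) : Prop :=
  IsHardyInf θ ∧ ∀ᵐ x ∂μH, ‖(θ : AddCircle (2 * Real.pi) → ℂ) x‖ = 1

/-- `a ∈ 𝒢H∞` with explicit inverse `b ∈ H∞`. -/
def GHinfPair (a b : Linf) : Prop := IsHardyInf a ∧ IsHardyInf b ∧ a * b = 1

/-- `a ∈ 𝒢H∞`: `a` is invertible in the algebra `H∞`. -/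
def IsGHinf (a : Linf) : Prop := ∃ b, GHinfPair a b

/-- `b ∈ 𝒢H̄∞`: `b` is the conjugate of an element of `𝒢H∞`. -/
def IsGHinfBar (b : Linf) : Prop := ∃ c, IsGHinf c ∧ b = star c

/-- `a ∈ 𝒢L∞` with explicit inverse `b`. -/
def GLinfPair (a b : Linf) : Prop := a * b = 1 ∧ b * a = 1

/-- `a ∈ 𝒢L∞`: `a` is invertible in the algebra `L∞`. -/
def IsGLinf (a : Linf) : Prop := ∃ b, GLinfPair a b

/-- The kernel of an operator between subspaces of `L²`, viewed as a subspace of `L²`. -/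
def subKer {K₁ K₂ : Submodule ℂ L2} (T : K₁ →L[ℂ] K₂) : Submodule ℂ L2 :=
  (LinearMap.ker (T : K₁ →ₗ[ℂ] K₂)).map K₁.subtype

/-- The range of an operator between subspaces of `L²`, viewed as a subspace of `L²`. -/
def subRan {K₁ K₂ : Submodule ℂ L2} (T : K₁ →L[ℂ] K₂) : Submodule ℂ L2 :=
  (LinearMap.range (T : K₁ →ₗ[ℂ] K₂)).map K₂.subtype

/-- The image of a subspace `S ⊆ K₁` under `T : K₁ → K₂`, viewed as a subspace of `L²`. -/
def opImage {K₁ K₂ : Submodule ℂ L2} (T : K₁ →L[ℂ] K₂) (S : Submodule ℂ K₁) :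
    Submodule ℂ L2 :=
  (S.map (T : K₁ →ₗ[ℂ] K₂)).map K₂.subtype

section Antilinear

variable {E : Type*} [NormedAddCommGroup E] [InnerProductSpace ℂ E]

/-- `C` is antilinear: `C(f + a g) = C f + ā C g`. -/
def IsAntilinearMap (C : E → E) : Prop :=
  ∀ (f g : E) (a : ℂ), C (f + a • g) = C f + (starRingEnd ℂ a) • C g

/-- `Cs` is the antilinear adjoint of `C`: `⟨C f, g⟩ = conj ⟨f, Cs g⟩`. -/
def IsAntilinearAdjointOf (C Cs : E → E) : Prop :=
  ∀ f g : E, (inner ℂ (C f) g : ℂ) = (starRingEnd ℂ) (inner ℂ f (Cs g) : ℂ)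

/-- `C` is an antilinear unitary: it is antilinear and its antilinear adjoint is its inverse. -/
def IsAntilinearUnitary (C : E → E) : Prop :=
  IsAntilinearMap C ∧ ∃ Cs : E → E, IsAntilinearAdjointOf C Cs ∧
    Function.LeftInverse Cs C ∧ Function.RightInverse Cs C

/-- `T` is complex selfadjoint with respect to `C` (with inverse `Cinv`): `C T C⁻¹ = T*`. -/
def IsComplexSelfadjointWith [CompleteSpace E] (T : E →L[ℂ] E) (C Cinv : E → E) : Prop :=
  ∀ f : E, C (T (Cinv f)) = ContinuousLinearMap.adjoint T f

end Antilinear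

/-! Since `E = T_{ā}^{H,K}` is the adjoint `F*` of `F = T_a^{K,H}`, the hypothesis reads
`T_φ^K = F* T_ψ^H F`, so `(T_φ^K)* = F* (T_ψ^H)* F`, while the condition
`F⁻¹ C_H F = E C_H E⁻¹` turns `C_K T_φ^K C_K⁻¹` into `F* (C_H T_ψ^H C_H⁻¹) F`.
As `F` is surjective and `F*` injective, the two selfadjointness identities are equivalent. -/

open ContinuousLinearMap in
theorem adjoint_mulCLM (φ : Linf) : adjoint (mulCLM φ) = mulCLM (star φ) := by
  symm
  rw [eq_adjoint_iff]
  intro x y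
  rw [MeasureTheory.L2.inner_def, MeasureTheory.L2.inner_def]
  refine integral_congr_ae ?_
  have hstar : ⇑(star φ) =ᵐ[μH] (starRingEnd ℂ) ∘ ⇑φ := MemLp.coeFn_toLp _
  filter_upwards [mulFun_coe (star φ) x, mulFun_coe φ y, hstar] with t hx hy hφ
  change inner ℂ (mulFun (star φ) x t) (y t) = inner ℂ (x t) (mulFun φ y t)
  simp only [RCLike.inner_apply, hx, hy, Pi.smul_apply', smul_eq_mul, hφ,
    Function.comp_apply, map_mul, Complex.conj_conj]
  ring

open ContinuousLinearMap in
theorem adjoint_genToeplitz (φ : Linf) (H₁ H₂ : Submodule ℂ L2)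
    [CompleteSpace H₁] [CompleteSpace H₂] :
    adjoint (genToeplitz φ H₁ H₂) = genToeplitz (star φ) H₂ H₁ := by
  rw [genToeplitz, genToeplitz, adjoint_comp, adjoint_comp, adjoint_mulCLM,
    Submodule.adjoint_subtypeL, Submodule.adjoint_orthogonalProjectionOnto, comp_assoc]

section ComplexSelfadjoint

open ContinuousLinearMap

variable {H K : Type*} [NormedAddCommGroup H] [InnerProductSpace ℂ H] [CompleteSpace H]
  [NormedAddCommGroup K] [InnerProductSpace ℂ K] [CompleteSpace K]

theorem isComplexSelfadjointWith_adjoint_conj_iff (F : K →L[ℂ] H) (T : H →L[ℂ] H)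
    (C Cinv : H → H) (Einv : K → H) (Finv : H → K)
    (hE : Function.LeftInverse Einv (adjoint F)) (hF : Function.RightInverse Finv F)
    (hC : ∀ f, Finv (C (F f)) = adjoint F (C (Einv f))) :
    IsComplexSelfadjointWith T C Cinv ↔
      IsComplexSelfadjointWith (adjoint F ∘L T ∘L F)
        (fun f => Finv (C (F f))) (fun f => Finv (Cinv (F f))) := by
  have hconj : ∀ f, Finv (C (F ((adjoint F ∘L T ∘L F) (Finv (Cinv (F f)))))) =
      adjoint F (C (T (Cinv (F f)))) := fun f => by
    rw [comp_apply, comp_apply, hF, hC, hE]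
  have hadj : ∀ f, adjoint (adjoint F ∘L T ∘L F) f = adjoint F (adjoint T (F f)) := fun f => by
    rw [adjoint_comp, adjoint_comp, adjoint_adjoint, comp_apply, comp_apply]
  simp only [IsComplexSelfadjointWith, hconj, hadj, hE.injective.eq_iff]
  exact hF.surjective.forall

end ComplexSelfadjoint

theorem statement16_general (H K : Submodule ℂ L2) [CompleteSpace H] [CompleteSpace K]
    (a : Linf) (φ ψ : Linf)
    (Einv : K →L[ℂ] H) (Finv : H →L[ℂ] K)
    (hE2 : Einv.comp (genToeplitz (star a) H K) = ContinuousLinearMap.id ℂ H)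
    (hF1 : (genToeplitz a K H).comp Finv = ContinuousLinearMap.id ℂ H)
    (hT : genToeplitz φ K K =
      (genToeplitz (star a) H K).comp ((genToeplitz ψ H H).comp (genToeplitz a K H)))
    (CH CHinv : H → H)
    (hcond : ∀ f : K,
      Finv (CH (genToeplitz a K H f)) = genToeplitz (star a) H K (CH (Einv f))) :
    IsComplexSelfadjointWith (genToeplitz ψ H H) CH CHinv ↔
      IsComplexSelfadjointWith (genToeplitz φ K K)
        (fun f : K => Finv (CH (genToeplitz a K H f)))
        (fun f : K => Finv (CHinv (genToeplitz a K H f))) := by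
  rw [hT]
  rw [← adjoint_genToeplitz] at hE2 hcond ⊢
  exact isComplexSelfadjointWith_adjoint_conj_iff _ _ _ _ Einv Finv
    (DFunLike.congr_fun hE2) (DFunLike.congr_fun hF1) hcond

/-- Theorem 4.4: if `T_φ^K = E T_ψ^H F` with `E = T_{ā}^{H,K}`,
`F = T_a^{K,H}`, `aK = H`, and `C_H` is an antilinear unitary on `H` with
`F⁻¹ C_H F = E C_H E⁻¹`, then `T_ψ^H` is complex selfadjoint w.r.t. `C_H` iff
`T_φ^K` is complex selfadjoint w.r.t. `C_K = F⁻¹ C_H F`. -/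
theorem statement16 (H K : Submodule ℂ L2) [CompleteSpace H] [CompleteSpace K]
    (a b : Linf) (hab : GLinfPair a b) (haK : smulSub a K = H) (φ ψ : Linf)
    (Einv : K →L[ℂ] H) (Finv : H →L[ℂ] K)
    (hE1 : (genToeplitz (star a) H K).comp Einv = ContinuousLinearMap.id ℂ K)
    (hE2 : Einv.comp (genToeplitz (star a) H K) = ContinuousLinearMap.id ℂ H)
    (hF1 : (genToeplitz a K H).comp Finv = ContinuousLinearMap.id ℂ H)
    (hF2 : Finv.comp (genToeplitz a K H) = ContinuousLinearMap.id ℂ K)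
    (hT : genToeplitz φ K K =
      (genToeplitz (star a) H K).comp ((genToeplitz ψ H H).comp (genToeplitz a K H)))
    (CH CHinv : H → H)
    (hClin : IsAntilinearMap CH) (hCadj : IsAntilinearAdjointOf CH CHinv)
    (hCli : Function.LeftInverse CHinv CH) (hCri : Function.RightInverse CHinv CH)
    (hcond : ∀ f : K,
      Finv (CH (genToeplitz a K H f)) = genToeplitz (star a) H K (CH (Einv f))) :
    IsComplexSelfadjointWith (genToeplitz ψ H H) CH CHinv ↔
      IsComplexSelfadjointWith (genToeplitz φ K K)
        (fun f : K => Finv (CH (genToeplitz a K H f)))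
        (fun f : K => Finv (CHinv (genToeplitz a K H f))) :=
  statement16_general H K a φ ψ Einv Finv hE2 hF1 hT CH CHinv hcond
end
end

section
/- Let θ be an inner function and φ = a₋·θ̄·a₊ with a₊ ∈ 𝒢H∞ and a₋ ∈ 𝒢H̄∞. Then: (a) ker T_φ = a₊⁻¹ K_θ; (b) (ker T_φ)^⊥ = ā₊ K_θ^⊥, where orthogonal complements are taken in L². -/
open MeasureTheory

noncomputable section

/-!
Multiplication by `a ∈ L∞` has adjoint multiplication by `ā`, and multiplication by a unit
`c ∈ 𝒢H∞` maps `H²` onto itself, so multiplication by `c̄` maps `(H²)^⊥` onto itself.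
Hence, for `f ∈ H²`, `T_φ f = 0` means `a₋ θ̄ a₊ f ⊥ H²`, i.e. `θ̄ a₊ f ⊥ H²`, i.e.
`a₊ f ∈ H² ⊖ θH² = K_θ`. Part (b) follows from (a) and the identity `(b K)^⊥ = ā K^⊥`,
valid for any subspace `K ⊆ L²` whenever `a b = 1` in `L∞`.
-/

open scoped InnerProductSpace

section Multiplication

lemma coeFn_mulCLM (a : Linf) (f : L2) : ⇑(mulCLM a f) =ᵐ[μH] fun x => a x * f x :=
  mulFun_coe a f

lemma coeFn_linf_mul (a b : Linf) : ⇑(a * b) =ᵐ[μH] fun x => a x * b x :=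
  MemLp.coeFn_toLp _

lemma coeFn_linf_one : ⇑(1 : Linf) =ᵐ[μH] fun _ => (1 : ℂ) :=
  MemLp.coeFn_toLp _

lemma coeFn_linf_star (a : Linf) : ⇑(star a) =ᵐ[μH] fun x => starRingEnd ℂ (a x) :=
  MemLp.coeFn_toLp _

lemma linf_mul_comm (a b : Linf) : a * b = b * a := by
  apply Lp.ext
  filter_upwards [coeFn_linf_mul a b, coeFn_linf_mul b a] with x hab hba
  rw [hab, hba, mul_comm]

lemma linf_star_mul (a b : Linf) : star (a * b) = star a * star b := by
  apply Lp.ext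
  filter_upwards [coeFn_linf_star (a * b), coeFn_linf_mul a b, coeFn_linf_mul (star a) (star b),
    coeFn_linf_star a, coeFn_linf_star b] with x h₁ h₂ h₃ h₄ h₅
  rw [h₁, h₂, h₃, h₄, h₅, map_mul]

lemma linf_star_one : star (1 : Linf) = 1 := by
  apply Lp.ext
  filter_upwards [coeFn_linf_star 1, coeFn_linf_one] with x h₁ h₂
  rw [h₁, h₂, map_one]

lemma linf_star_mul_star_of_mul_eq_one {a b : Linf} (h : a * b = 1) : star b * star a = 1 := by
  rw [← linf_star_mul, linf_mul_comm, h, linf_star_one]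

lemma mulCLM_mul (a b : Linf) (f : L2) : mulCLM (a * b) f = mulCLM a (mulCLM b f) := by
  apply Lp.ext
  filter_upwards [coeFn_mulCLM (a * b) f, coeFn_mulCLM a (mulCLM b f), coeFn_mulCLM b f,
    coeFn_linf_mul a b] with x h₁ h₂ h₃ h₄
  rw [h₁, h₂, h₃, h₄, mul_assoc]

lemma mulCLM_one (f : L2) : mulCLM 1 f = f := by
  apply Lp.ext
  filter_upwards [coeFn_mulCLM 1 f, coeFn_linf_one] with x h₁ h₂
  rw [h₁, h₂, one_mul]

lemma mulCLM_mulCLM_of_mul_eq_one {a b : Linf} (h : a * b = 1) (f : L2) :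
    mulCLM a (mulCLM b f) = f := by
  rw [← mulCLM_mul, h, mulCLM_one]

lemma inner_mulCLM_left (a : Linf) (f g : L2) :
    ⟪mulCLM a f, g⟫_ℂ = ⟪f, mulCLM (star a) g⟫_ℂ := by
  rw [L2.inner_def, L2.inner_def]
  apply integral_congr_ae
  filter_upwards [coeFn_mulCLM a f, coeFn_mulCLM (star a) g, coeFn_linf_star a] with x h₁ h₂ h₃
  rw [h₁, h₂, h₃]
  simp only [RCLike.inner_apply, map_mul]
  ring

lemma mem_smulSub_iff_of_mul_eq_one {a b : Linf} (h : a * b = 1) (K : Submodule ℂ L2)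
    (f : L2) : f ∈ smulSub b K ↔ mulCLM a f ∈ K := by
  constructor
  · rintro ⟨g, hg, rfl⟩
    simpa [mulCLM_mulCLM_of_mul_eq_one h] using hg
  · intro hf
    refine ⟨mulCLM a f, hf, ?_⟩
    exact mulCLM_mulCLM_of_mul_eq_one (by rwa [linf_mul_comm]) f

lemma mem_orthogonal_smulSub_iff (a : Linf) (K : Submodule ℂ L2) (f : L2) :
    f ∈ (smulSub a K)ᗮ ↔ mulCLM (star a) f ∈ Kᗮ := by
  simp only [Submodule.mem_orthogonal, smulSub, Submodule.mem_map, forall_exists_index,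
    and_imp, forall_apply_eq_imp_iff₂]
  exact forall₂_congr fun g _ => by rw [ContinuousLinearMap.coe_coe, inner_mulCLM_left]

lemma orthogonal_smulSub_of_mul_eq_one {a b : Linf} (h : a * b = 1) (K : Submodule ℂ L2) :
    (smulSub b K)ᗮ = smulSub (star a) Kᗮ := by
  ext f
  rw [mem_orthogonal_smulSub_iff,
    mem_smulSub_iff_of_mul_eq_one (linf_star_mul_star_of_mul_eq_one h)]

end Multiplication

section Hardy

lemma mem_hardy_iff_fourierCoeff (f : L2) :
    f ∈ Hardy ↔ ∀ n : ℤ, n < 0 → fourierCoeff (⇑f) n = 0 := by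
  simp only [← fourierBasis_repr]
  rfl

lemma inner_fourierBasis_left (f : L2) (n : ℤ) :
    ⟪(fourierBasis n : L2), f⟫_ℂ = fourierCoeff (⇑f) n := by
  rw [← fourierBasis_repr, fourierBasis.repr_apply_apply]

lemma inner_eq_tsum_fourierCoeff (f g : L2) :
    ⟪f, g⟫_ℂ = ∑' n : ℤ, starRingEnd ℂ (fourierCoeff (⇑f) n) * fourierCoeff (⇑g) n := by
  rw [← fourierBasis.tsum_inner_mul_inner f g]
  refine tsum_congr fun n => ?_
  rw [inner_fourierBasis_left g n, ← inner_conj_symm, inner_fourierBasis_left f n]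

lemma fourierCoeff_mulCLM_star_fourierBasis (a : Linf) (n k : ℤ) :
    fourierCoeff (⇑(mulCLM (star a) (fourierBasis n : L2))) k
      = starRingEnd ℂ (fourierCoeff (⇑a) (n - k)) := by
  have hfourier : ⇑(fourierBasis n : L2) =ᵐ[μH] fourier n := by
    rw [coe_fourierBasis]
    exact coeFn_fourierLp 2 n
  have hintegrand : (fun t => fourier (-k) t • mulCLM (star a) (fourierBasis n : L2) t)
      =ᵐ[μH] fun t => starRingEnd ℂ (fourier (-(n - k)) t • a t) := by
    filter_upwards [coeFn_mulCLM (star a) (fourierBasis n : L2), coeFn_linf_star a,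
      hfourier] with t h₁ h₂ h₃
    rw [h₁, h₂, h₃, smul_eq_mul, smul_eq_mul, map_mul, ← fourier_neg, neg_neg,
      sub_eq_add_neg, fourier_add]
    ring
  rw [fourierCoeff, integral_congr_ae hintegrand, integral_conj]
  rfl

lemma mulCLM_mem_hardy {a : Linf} (ha : IsHardyInf a) {f : L2} (hf : f ∈ Hardy) :
    mulCLM a f ∈ Hardy := by
  rw [mem_hardy_iff_fourierCoeff] at hf ⊢
  intro n hn
  -- `⟪e_n, a f⟫ = ⟪ā e_n, f⟫` and `ā e_n` only has Fourier modes `k` with `n - k ≥ 0`.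
  have hterm : ∀ k : ℤ, starRingEnd ℂ (fourierCoeff (⇑f) k)
      * fourierCoeff (⇑(mulCLM (star a) (fourierBasis n : L2))) k = 0 := by
    intro k
    rcases lt_or_ge k 0 with hk | hk
    · rw [hf k hk, map_zero, zero_mul]
    · rw [fourierCoeff_mulCLM_star_fourierBasis, ha (n - k) (by omega), map_zero, mul_zero]
  rw [← inner_fourierBasis_left, ← inner_conj_symm, inner_mulCLM_left, inner_eq_tsum_fourierCoeff,
    tsum_congr hterm, tsum_zero, map_zero]

lemma mulCLM_star_mem_hardy_orthogonal {a : Linf} (ha : IsHardyInf a) {g : L2}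
    (hg : g ∈ Hardyᗮ) : mulCLM (star a) g ∈ Hardyᗮ := by
  rw [← mem_orthogonal_smulSub_iff]
  rintro _ ⟨f, hf, rfl⟩
  exact hg _ (mulCLM_mem_hardy ha hf)

lemma mulCLM_mem_hardy_iff {a b : Linf} (h : GHinfPair a b) (f : L2) :
    mulCLM a f ∈ Hardy ↔ f ∈ Hardy := by
  obtain ⟨ha, hb, hab⟩ := h
  refine ⟨fun hf => ?_, mulCLM_mem_hardy ha⟩
  rw [← mulCLM_mulCLM_of_mul_eq_one (by rwa [linf_mul_comm] : b * a = 1) f]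
  exact mulCLM_mem_hardy hb hf

lemma mulCLM_star_mem_hardy_orthogonal_iff {a b : Linf} (h : GHinfPair a b) (g : L2) :
    mulCLM (star a) g ∈ Hardyᗮ ↔ g ∈ Hardyᗮ := by
  obtain ⟨ha, hb, hab⟩ := h
  refine ⟨fun hg => ?_, mulCLM_star_mem_hardy_orthogonal ha⟩
  rw [← mulCLM_mulCLM_of_mul_eq_one (linf_star_mul_star_of_mul_eq_one hab) g]
  exact mulCLM_star_mem_hardy_orthogonal hb hg

lemma mem_subKer_toeplitz_iff (φ : Linf) (f : L2) :
    f ∈ subKer (genToeplitz φ Hardy Hardy) ↔ f ∈ Hardy ∧ mulCLM φ f ∈ Hardyᗮ := by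
  constructor
  · rintro ⟨⟨f, hf⟩, hker, rfl⟩
    exact ⟨hf, Submodule.orthogonalProjectionOnto_eq_zero_iff.mp hker⟩
  · rintro ⟨hf, hφf⟩
    have hker : Hardy.orthogonalProjectionOnto (mulCLM φ f) = 0 :=
      Submodule.orthogonalProjectionOnto_eq_zero_iff.mpr hφf
    exact ⟨⟨f, hf⟩, hker, rfl⟩

end Hardy

theorem statement17_general (θ : Linf)
    (aP bP : Linf) (haP : GHinfPair aP bP)
    (aM : Linf) (haM : IsGHinfBar aM)
    (φ : Linf) (hφ : φ = aM * star θ * aP) :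
    subKer (genToeplitz φ Hardy Hardy) = smulSub bP (modelSpace θ) ∧
    (subKer (genToeplitz φ Hardy Hardy))ᗮ = smulSub (star aP) (modelSpace θ)ᗮ := by
  obtain ⟨c, ⟨d, hcd⟩, rfl⟩ := haM
  have hker : subKer (genToeplitz φ Hardy Hardy) = smulSub bP (modelSpace θ) := by
    ext f
    rw [mem_subKer_toeplitz_iff, mem_smulSub_iff_of_mul_eq_one haP.2.2, modelSpace,
      Submodule.mem_inf, mulCLM_mem_hardy_iff haP, mem_orthogonal_smulSub_iff, hφ, mulCLM_mul,
      mulCLM_mul, mulCLM_star_mem_hardy_orthogonal_iff hcd]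
  refine ⟨hker, ?_⟩
  rw [hker]
  exact orthogonal_smulSub_of_mul_eq_one haP.2.2 _

/-- Proposition 5.3: if `φ = a₋ θ̄ a₊` with `a₊ ∈ 𝒢H∞`
(inverse `b₊`) and `a₋ ∈ 𝒢H̄∞`, then `ker T_φ = a₊⁻¹ K_θ` and
`(ker T_φ)^⊥ = ā₊ K_θ^⊥` in `L²`. -/
theorem statement17 (θ : Linf) (hθ : IsInner θ)
    (aP bP : Linf) (haP : GHinfPair aP bP)
    (aM : Linf) (haM : IsGHinfBar aM)
    (φ : Linf) (hφ : φ = aM * star θ * aP) :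
    subKer (genToeplitz φ Hardy Hardy) = smulSub bP (modelSpace θ) ∧
    (subKer (genToeplitz φ Hardy Hardy))ᗮ = smulSub (star aP) (modelSpace θ)ᗮ :=
  statement17_general θ aP bP haP aM haM φ hφ
end
end
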